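/- Let (G, ℓ : V(G) → Σ, C₀, F₀ ⊆ Σ²) be a regular antichain and let r ≥ 3. Then the associated directed graph H^r contains a spanning path: a directed path that starts at a vertex of V(G) × {1}, ends at a vertex of V(G) × {r}, and contains at least one vertex of V(G) × {i} for every i ∈ {1,…,r}. -/

import Mathlib

namespace P2601

/-- A relation is a well-quasi-ordering if every infinite sequence admits
`i < j` with `f i ≤ f j`. -/
def IsWqo {X : Type*} (le : X → X → Prop) : Prop :=
  ∀ f : ℕ → X, ∃ i j : ℕ, i < j ∧ le (f i) (f j)

/-- Finite rooted ordered binary trees with edge labels in `α`: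
a node carries the labels of its left and right edges. -/
inductive BT (α : Type) : Type
  | leaf : BT α
  | node : α → BT α → α → BT α → BT α

namespace BT
variable {α : Type}

/-- Nodes of a tree, encoded as lists of directions from the root
(`false` = left, `true` = right). -/
def valid : BT α → List Bool → Prop
  | _, [] => True
  | .leaf, _ :: _ => False
  | .node _ l _ _, false :: p => valid l p
  | .node _ _ _ r, true :: p => valid r p

/-- Subtree rooted at a position. -/
def sub : BT α → List Bool → BT α
  | t, [] => t
  | .leaf, _ :: _ => .leaf
  | .node _ l _ _, false :: p => sub l p
  | .node _ _ _ r, true :: p => sub r p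

/-- Leaf positions. -/
def IsLeafPos (t : BT α) (p : List Bool) : Prop := t.valid p ∧ t.sub p = .leaf

/-- Product (in `M`, through the morphism determined by `μ`) of the edge
labels read along the downward path `p`. -/
def prodW {M : Type} [Monoid M] (μ : α → M) : BT α → List Bool → M
  | _, [] => 1
  | .leaf, _ :: _ => 1
  | .node a l _ _, false :: p => μ a * prodW μ l p
  | .node _ _ c r, true :: p => μ c * prodW μ r p

/-- A linear tree: every internal node has at most one non-leaf child. -/
def IsLinear : BT α → Prop
  | .leaf => True
  | .node _ l _ r => (l = .leaf ∧ IsLinear r) ∨ (r = .leaf ∧ IsLinear l)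

end BT

/-- `π_T(x,y)`: the product of the edge labels (through `μ`) along the
downward path from the node `x` to its descendant `y`. -/
def pi {α M : Type} [Monoid M] (μ : α → M) (t : BT α) (x y : List Bool) : M :=
  BT.prodW μ (t.sub x) (y.drop x.length)

/-- Strict ancestor relation on positions (strict prefix). -/
def SP (x y : List Bool) : Prop := x <+: y ∧ x ≠ y

/-- Longest common prefix: the least common ancestor of two nodes. -/
def lcp : List Bool → List Bool → List Bool
  | a :: x, b :: y => if a = b then a :: lcp x y else []
  | _, _ => []

/-- `x` lies strictly to the left of `y` in the sibling (left-to-right) order. -/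
def LeftOf (x y : List Bool) : Prop :=
  ∃ p : List Bool, (p ++ [false]) <+: x ∧ (p ++ [true]) <+: y

/-- `σ(x:y)`: the minimum split value of the nodes strictly between `x` and its
strict descendant `y`, and `N+1` if there is no such node. -/
def gap (N : ℕ) (σ : List Bool → ℕ) (x y : List Bool) : ℕ :=
  if h : (Finset.Ioo x.length y.length).Nonempty then
    (Finset.Ioo x.length y.length).inf' h (fun k => σ (y.take k))
  else N + 1

/-- A split of height `N`: every node receives a value in `{1,…,N}`. -/
def IsSplit {α : Type} (N : ℕ) (t : BT α) (σ : List Bool → ℕ) : Prop :=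
  ∀ p, t.valid p → 1 ≤ σ p ∧ σ p ≤ N

/-- `x` and `y` are `k`-neighbours: both have split value `k`, they are on a
common branch, and the split values strictly between them are `≥ k`. -/
def KNbr (N : ℕ) (σ : List Bool → ℕ) (k : ℕ) (x y : List Bool) : Prop :=
  σ x = k ∧ σ y = k ∧
    (x = y ∨ (SP x y ∧ k ≤ gap N σ x y) ∨ (SP y x ∧ k ≤ gap N σ y x))

/-- Forward Ramseyan split. -/
def FR {α M : Type} [Monoid M] (μ : α → M) (N : ℕ) (t : BT α)
    (σ : List Bool → ℕ) : Prop :=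
  ∀ k, 1 ≤ k → k ≤ N → ∀ x y x' y' : List Bool,
    t.valid x → t.valid y → t.valid x' → t.valid y' →
    KNbr N σ k x y → KNbr N σ k x x' → KNbr N σ k x y' →
    KNbr N σ k y x' → KNbr N σ k y y' → KNbr N σ k x' y' →
    SP x y → SP x' y' →
    pi μ t x y = pi μ t x y * pi μ t x' y'

/-- Gap-embedding between trees with splits: a tree embedding (preserving the
ancestor relation, least common ancestors and the sibling order) satisfying the
root gap property and the edge gap property. -/
def IsGapEmb {α β : Type} (N : ℕ) (t₁ : BT α) (σ₁ : List Bool → ℕ)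
    (t₂ : BT β) (σ₂ : List Bool → ℕ) (h : List Bool → List Bool) : Prop :=
  (∀ p, t₁.valid p → t₂.valid (h p)) ∧
  (∀ p q, t₁.valid p → t₁.valid q → h p = h q → p = q) ∧
  (∀ p q, t₁.valid p → t₁.valid q → SP p q → SP (h p) (h q)) ∧
  (∀ p q, t₁.valid p → t₁.valid q → h (lcp p q) = lcp (h p) (h q)) ∧
  (∀ p q, t₁.valid p → t₁.valid q → LeftOf p q → LeftOf (h p) (h q)) ∧
  σ₁ [] ≤ gap N σ₂ [] (h []) ∧
  (∀ p b, t₁.valid (p ++ [b]) → σ₁ (p ++ [b]) ≤ gap N σ₂ (h p) (h (p ++ [b])))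

/-- Markings of nodes. -/
inductive Mark : Type
  | marked | separating | dummy
deriving DecidableEq

/-- Well-marked nested tree condition. -/
def WellMarked {α : Type} (N : ℕ) (t : BT α) (σ : List Bool → ℕ)
    (ρ : List Bool → Mark) : Prop :=
  ρ [] = .marked ∧
  (∀ p q, t.valid p → t.valid q → ρ p = .marked → ρ q = .marked →
    ρ (lcp p q) = .marked) ∧
  (∀ k, 1 ≤ k → k ≤ N → ∀ x y z₁, t.valid x → t.valid y → t.valid z₁ →
    ρ x = .marked → ρ y = .marked → SP x z₁ → SP z₁ y →
    k < gap N σ x z₁ → σ z₁ = k → k ≤ gap N σ z₁ y →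
    ∃ z₂ z₃, t.valid z₂ ∧ t.valid z₃ ∧ SP z₁ z₂ ∧ z₂ <+: z₃ ∧ z₃ <+: y ∧
      σ z₂ = k ∧ σ z₃ = k ∧ k < gap N σ z₁ z₂ ∧ k ≤ gap N σ z₂ z₃ ∧
      k ≤ gap N σ z₃ y ∧ ρ z₁ = .marked ∧
      (ρ z₂ = .marked ∨ ρ z₂ = .separating))

/-- `z` is the closest ancestor of `x` having split value `k`. -/
def ClosestAnc (σ : List Bool → ℕ) (k : ℕ) (x z : List Bool) : Prop :=
  z <+: x ∧ σ z = k ∧ ∀ w, w <+: x → σ w = k → w <+: z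

/-- Marked gap-embedding between marked nested trees. -/
def IsMarkedGapEmb {M : Type} [Monoid M] (N : ℕ)
    (t₁ : BT M) (σ₁ : List Bool → ℕ) (ρ₁ : List Bool → Mark)
    (t₂ : BT M) (σ₂ : List Bool → ℕ) (ρ₂ : List Bool → Mark)
    (h : List Bool → List Bool) : Prop :=
  IsGapEmb N t₁ σ₁ t₂ σ₂ h ∧
  -- sends the root to the root
  h [] = [] ∧
  -- maps leaves to leaves
  (∀ p, t₁.IsLeafPos p → t₂.IsLeafPos (h p)) ∧
  -- respects the marking
  (∀ p, t₁.valid p → ρ₁ p = ρ₂ (h p)) ∧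
  -- respects local products
  (∀ p b, t₁.valid (p ++ [b]) → t₂.valid (h p ++ [b]) →
    pi id t₁ p (p ++ [b]) = pi id t₂ (h p) (h p ++ [b])) ∧
  -- respects neighbourhood products
  (∀ k, 1 ≤ k → k ≤ N → ∀ x z z', t₁.valid x →
    ClosestAnc σ₁ k x z → ClosestAnc σ₂ k (h x) z' →
    pi id t₁ z x = pi id t₂ z' (h x)) ∧
  -- gluing on non-dummy nodes
  (∀ p b, t₁.valid (p ++ [b]) → ρ₁ (p ++ [b]) ≠ .dummy →
    ∃ b', h (p ++ [b]) = h p ++ [b'])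

/-- `L`-bounded marked nested tree: every path of consecutive non-dummy nodes
has length at most `L`. -/
def LBounded {α : Type} (L : ℕ) (t : BT α) (ρ : List Bool → Mark) : Prop :=
  ∀ p q : List Bool, t.valid (p ++ q) →
    (∀ i, i ≤ q.length → ρ (p ++ q.take i) ≠ .dummy) → q.length ≤ L

/-- The edge relation of the graph interpreted from a tree by the monoid
interpretation determined by `μ` and `P ⊆ M³`. -/
def IPEdge {α M : Type} [Monoid M] (μ : α → M) (P : Set (M × M × M))
    (t : BT α) (x y : List Bool) : Prop :=
  (LeftOf x y ∧ (pi μ t [] (lcp x y), pi μ t (lcp x y) x, pi μ t (lcp x y) y) ∈ P) ∨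
  (LeftOf y x ∧ (pi μ t [] (lcp y x), pi μ t (lcp y x) y, pi μ t (lcp y x) x) ∈ P)

/-- One-hole contexts of binary trees (used to represent boughs: a bough is the
tree fragment between `b₀` and `b_n`, the hole being placed below `b_n`). -/
inductive CT (α : Type) : Type
  | hole : CT α
  | nodeL : α → CT α → α → BT α → CT α
  | nodeR : α → BT α → α → CT α → CT α

namespace CT
variable {α : Type}

/-- Position of the hole. -/
def holePos : CT α → List Bool
  | .hole => []
  | .nodeL _ c _ _ => false :: c.holePos
  | .nodeR _ _ _ c => true :: c.holePos

/-- Plugging a tree into the hole. -/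
def plug : CT α → BT α → BT α
  | .hole, s => s
  | .nodeL a c b r, s => .node a (c.plug s) b r
  | .nodeR a l b c, s => .node a l b (c.plug s)

end CT

/-- A bough of level `k`, represented by the one-hole context `c` (the hole
sits at the last backbone node `b_n`) together with its split `σ`: the root and
the hole position are backbone nodes (split value `k`), every node on the path
from the root to the hole has split value `≥ k`, and the dimension is `≥ 1`. -/
def IsBough {α : Type} (N k : ℕ) (c : CT α) (σ : List Bool → ℕ) : Prop :=
  c.holePos ≠ [] ∧
  (∀ p, (c.plug .leaf).valid p → 1 ≤ σ p ∧ σ p ≤ N) ∧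
  σ [] = k ∧ σ c.holePos = k ∧
  ∀ j, 0 < j → j < c.holePos.length → k ≤ σ (c.holePos.take j)

/-- Dimension of a bough: the number of backbone nodes below the root. -/
def boughDim {α : Type} (k : ℕ) (c : CT α) (σ : List Bool → ℕ) : ℕ :=
  ((Finset.Icc 1 c.holePos.length).filter fun j => σ (c.holePos.take j) = k).card

/-- `j` is the depth of a backbone node of the bough. -/
def Backbone {α : Type} (k : ℕ) (c : CT α) (σ : List Bool → ℕ) (j : ℕ) : Prop :=
  j ≤ c.holePos.length ∧ σ (c.holePos.take j) = k

/-- `m` is the first idempotent value `π(b₀,b₁)` of the bough. -/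
def FirstIdem {M : Type} [Monoid M] (k : ℕ) (c : CT M) (σ : List Bool → ℕ)
    (m : M) : Prop :=
  ∃ j, 0 < j ∧ j ≤ c.holePos.length ∧ σ (c.holePos.take j) = k ∧
    (∀ j', 0 < j' → j' < j → σ (c.holePos.take j') ≠ k) ∧
    m = pi id (c.plug .leaf) [] (c.holePos.take j)

/-- A context `C[□]` in which boughs are plugged. -/
structure BCtx (M : Type) where
  cRoot : CT M
  σRoot : List Bool → ℕ
  tLeft : BT M
  σLeft : List Bool → ℕ
  tRight : BT M
  σRight : List Bool → ℕ
  mLeft : M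
  mRight : M

/-- The tree `C[B]`. -/
def BCtx.plugB {M : Type} (C : BCtx M) (c : CT M) : BT M :=
  C.cRoot.plug (c.plug (BT.node C.mLeft C.tLeft C.mRight C.tRight))

/-- The split induced on `C[B]`. -/
def BCtx.plugSplit {M : Type} (C : BCtx M) (c : CT M) (σ : List Bool → ℕ) :
    List Bool → ℕ :=
  fun p =>
    if C.cRoot.holePos.isPrefixOf p then
      let q := p.drop C.cRoot.holePos.length
      if c.holePos.isPrefixOf q then
        match q.drop c.holePos.length with
        | [] => σ q
        | false :: rest => C.σLeft rest
        | true :: rest => C.σRight rest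
      else σ q
    else C.σRoot p

/-- Two boughs of level `k` are compatible: same first idempotent value, and
every context making the first forward Ramseyan makes the second forward
Ramseyan. -/
def Compatible {M : Type} [Monoid M] (N k : ℕ) (c : CT M) (σ : List Bool → ℕ)
    (c' : CT M) (σ' : List Bool → ℕ) : Prop :=
  (∀ m, FirstIdem k c σ m ↔ FirstIdem k c' σ' m) ∧
  ∀ C : BCtx M, FR id N (C.plugB c) (C.plugSplit c σ) →
    FR id N (C.plugB c') (C.plugSplit c' σ')

/-- A good bough with respect to the interpretation `I_P`. -/
def GoodBough {M : Type} [Monoid M] (P : Set (M × M × M)) (N k : ℕ)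
    (C : BCtx M) (c : CT M) (σ : List Bool → ℕ) : Prop :=
  ∃ (c' : CT M) (σ' : List Bool → ℕ), IsBough N k c' σ' ∧
    Compatible N k c σ c' σ' ∧
  ∃ h : List Bool → List Bool,
    -- h is an embedding of graphs from I_P(C[B]) to I_P(C[H])
    (∀ x, (C.plugB c).IsLeafPos x → (C.plugB c').IsLeafPos (h x)) ∧
    (∀ x y, (C.plugB c).IsLeafPos x → (C.plugB c).IsLeafPos y →
      h x = h y → x = y) ∧
    (∀ x y, (C.plugB c).IsLeafPos x → (C.plugB c).IsLeafPos y →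
      (IPEdge id P (C.plugB c) x y ↔ IPEdge id P (C.plugB c') (h x) (h y))) ∧
    -- h is the identity on the leaves of C[□]
    (∀ p, ¬ (C.cRoot.holePos <+: p) → (C.plugB c).IsLeafPos p → h p = p) ∧
    (∀ q, (C.plugB c).IsLeafPos (C.cRoot.holePos ++ c.holePos ++ false :: q) →
      h (C.cRoot.holePos ++ c.holePos ++ false :: q) =
        C.cRoot.holePos ++ c'.holePos ++ false :: q) ∧
    (∀ q, (C.plugB c).IsLeafPos (C.cRoot.holePos ++ c.holePos ++ true :: q) →
      h (C.cRoot.holePos ++ c.holePos ++ true :: q) =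
        C.cRoot.holePos ++ c'.holePos ++ true :: q) ∧
    -- three consecutive blocks of H have no leaf in the image of h
    ∃ j₀ j₁ j₂ j₃, Backbone k c' σ' j₀ ∧ Backbone k c' σ' j₁ ∧
      Backbone k c' σ' j₂ ∧ Backbone k c' σ' j₃ ∧
      j₀ < j₁ ∧ j₁ < j₂ ∧ j₂ < j₃ ∧
      (∀ j, Backbone k c' σ' j →
        ¬ (j₀ < j ∧ j < j₁) ∧ ¬ (j₁ < j ∧ j < j₂) ∧ ¬ (j₂ < j ∧ j < j₃)) ∧
      (∀ x, (C.plugB c').IsLeafPos x →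
        (C.cRoot.holePos ++ c'.holePos.take j₀) <+: x →
        ¬ ((C.cRoot.holePos ++ c'.holePos.take j₃) <+: x) →
        ∀ y, (C.plugB c).IsLeafPos y → h y ≠ x)

/-! ### Classes of finite graphs -/

/-- A finite graph: a number of vertices together with a simple graph on them. -/
def FinGraph : Type := (n : ℕ) × SimpleGraph (Fin n)

/-- Labelled induced-subgraph embedding between labelled graphs. -/
def LabEmbOn {VG VH X : Type} (le : X → X → Prop)
    (adjG : VG → VG → Prop) (adjH : VH → VH → Prop)
    (lG : VG → X) (lH : VH → X) : Prop :=
  ∃ f : VG → VH, Function.Injective f ∧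
    (∀ u v, adjG u v ↔ adjH (f u) (f v)) ∧ ∀ v, le (lG v) (lH (f v))

/-- The `(X,le)`-labelled graphs with underlying graph in `Cl` are WQO under
labelled induced-subgraph embeddings. -/
def ClassWqoWith (Cl : Set FinGraph) (X : Type) (le : X → X → Prop) : Prop :=
  ∀ G : ℕ → FinGraph, (∀ i, G i ∈ Cl) → ∀ l : (i : ℕ) → Fin (G i).1 → X,
    ∃ i j : ℕ, i < j ∧ LabEmbOn le (G i).2.Adj (G j).2.Adj (l i) (l j)

/-- 2-well-quasi-ordered class. -/
def TwoWqoClass (Cl : Set FinGraph) : Prop :=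
  ∀ X : Type, Nonempty (X ≃ Fin 2) → ClassWqoWith Cl X Eq

/-- ∀-well-quasi-ordered class. -/
def ForallWqoClass (Cl : Set FinGraph) : Prop :=
  ∀ (X : Type) (le : X → X → Prop), Reflexive le → Transitive le → IsWqo le →
    ClassWqoWith Cl X le

/-- The graph `(V, adj)` is (isomorphic to) the interpretation of a tree. -/
def InImageOn {α M : Type} [Monoid M] (μ : α → M) (P : Set (M × M × M))
    (V : Type) (adj : V → V → Prop) : Prop :=
  ∃ (T : BT α) (e : V → List Bool), Function.Injective e ∧
    (∀ v, T.IsLeafPos (e v)) ∧ (∀ p, T.IsLeafPos p → ∃ v, e v = p) ∧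
    ∀ u v, adj u v ↔ IPEdge μ P T (e u) (e v)

/-- The image of the monoid interpretation `(μ, P)`, as a class of graphs. -/
def ImageClass {α M : Type} [Monoid M] (μ : α → M) (P : Set (M × M × M)) :
    Set FinGraph :=
  {G | InImageOn μ P (Fin G.1) G.2.Adj}

/-- Hereditary class (closed under induced subgraphs). -/
def HereditaryClass (Cl : Set FinGraph) : Prop :=
  ∀ G ∈ Cl, ∀ H : FinGraph,
    (∃ f : Fin H.1 → Fin G.1, Function.Injective f ∧
      ∀ u v, H.2.Adj u v ↔ G.2.Adj (f u) (f v)) → H ∈ Cl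


/-! ### Regular and periodic sequences of graphs -/

/-- The edge relation of the `r`-th graph `G^r` of the regular sequence
`(G₀, ℓ, C₀, F₀)`, on vertex set `Fin m × Fin r`. -/
def regAdj {m : ℕ} {Sig : Type} (G₀ : SimpleGraph (Fin m)) (ℓ : Fin m → Sig)
    (C₀ F₀ : Set (Sig × Sig)) (r : ℕ) :
    (Fin m × Fin r) → (Fin m × Fin r) → Prop := fun a b =>
  (a.2 = b.2 ∧ G₀.Adj a.1 b.1) ∨
  ((a.2 : ℕ) + 1 = (b.2 : ℕ) ∧ (ℓ a.1, ℓ b.1) ∈ C₀) ∨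
  ((b.2 : ℕ) + 1 = (a.2 : ℕ) ∧ (ℓ b.1, ℓ a.1) ∈ C₀) ∨
  ((a.2 : ℕ) + 1 < (b.2 : ℕ) ∧ (ℓ a.1, ℓ b.1) ∈ F₀) ∨
  ((b.2 : ℕ) + 1 < (a.2 : ℕ) ∧ (ℓ b.1, ℓ a.1) ∈ F₀)

/-- Labels of the vertices of `G^r`: the label in `Sig` together with the
markers `▷` (first copy) and `◁` (last copy). -/
def regLabel {m : ℕ} {Sig : Type} (ℓ : Fin m → Sig) (r : ℕ) :
    Fin m × Fin r → Sig × Bool × Bool := fun a =>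
  (ℓ a.1, decide ((a.2 : ℕ) = 0), decide ((a.2 : ℕ) = r - 1))

/-- The regular sequence `(G₀, ℓ, C₀, F₀)` is a regular antichain. -/
def IsRegularAntichain {m : ℕ} {Sig : Type} (G₀ : SimpleGraph (Fin m))
    (ℓ : Fin m → Sig) (C₀ F₀ : Set (Sig × Sig)) : Prop :=
  ∀ r s : ℕ, 1 ≤ r → 1 ≤ s → r ≠ s →
    ¬ LabEmbOn Eq (regAdj G₀ ℓ C₀ F₀ r) (regAdj G₀ ℓ C₀ F₀ s)
        (regLabel ℓ r) (regLabel ℓ s)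

/-- The arcs of the directed graph `H^r` associated with a regular sequence. -/
def regArc {m : ℕ} {Sig : Type} (G₀ : SimpleGraph (Fin m)) (ℓ : Fin m → Sig)
    (C₀ F₀ : Set (Sig × Sig)) (r : ℕ) :
    (Fin m × Fin r) → (Fin m × Fin r) → Prop := fun a b =>
  ¬ (regAdj G₀ ℓ C₀ F₀ r a b ↔ (ℓ a.1, ℓ b.1) ∈ F₀)

/-- `i`-th letter of the infinite periodic word `w^ω`. -/
def perLetter {Sig : Type} {p : ℕ} (hp : 0 < p) (w : Fin p → Sig) (n : ℕ) : Sig :=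
  w ⟨n % p, Nat.mod_lt n hp⟩

/-- The edge relation of the `r`-th graph `G_{w^r}` of the periodic sequence
`(w, C₀, F₀)`, on vertex set `Fin (r * p)`. -/
def perAdj {Sig : Type} {p : ℕ} (hp : 0 < p) (w : Fin p → Sig)
    (C₀ F₀ : Set (Sig × Sig)) (r : ℕ) :
    Fin (r * p) → Fin (r * p) → Prop := fun a b =>
  ((a : ℕ) + 1 = (b : ℕ) ∧ (perLetter hp w a, perLetter hp w b) ∈ C₀) ∨
  ((b : ℕ) + 1 = (a : ℕ) ∧ (perLetter hp w b, perLetter hp w a) ∈ C₀) ∨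
  ((a : ℕ) + 1 < (b : ℕ) ∧ (perLetter hp w a, perLetter hp w b) ∈ F₀) ∨
  ((b : ℕ) + 1 < (a : ℕ) ∧ (perLetter hp w b, perLetter hp w a) ∈ F₀)

/-- Labels of the vertices of `G_{w^r}`: unlabelled (`0`) except the first
vertex (`1`, for `▷`) and the last vertex (`2`, for `◁`). -/
def perLabel (n : ℕ) (i : Fin n) : ℕ :=
  if (i : ℕ) = 0 then 1 else if (i : ℕ) = n - 1 then 2 else 0

/-- The periodic sequence `(w, C₀, F₀)` is a periodic antichain. -/
def IsPeriodicAntichain {Sig : Type} {p : ℕ} (hp : 0 < p) (w : Fin p → Sig)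
    (C₀ F₀ : Set (Sig × Sig)) : Prop :=
  ∀ r s : ℕ, 1 ≤ r → 1 ≤ s → r ≠ s →
    ¬ LabEmbOn Eq (perAdj hp w C₀ F₀ r) (perAdj hp w C₀ F₀ s)
        (perLabel (r * p)) (perLabel (s * p))

/-! ### Existential first-order formulas over labelled graphs -/

/-- Quantifier-free formulas in the language of `Sig`-labelled graphs,
with variables in `α`. -/
inductive QF (Sig : Type) (α : Type) : Type
  | tru : QF Sig α
  | eq : α → α → QF Sig α
  | edge : α → α → QF Sig α
  | lab : Sig → α → QF Sig α
  | not : QF Sig α → QF Sig α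
  | and : QF Sig α → QF Sig α → QF Sig α
  | or : QF Sig α → QF Sig α → QF Sig α

/-- Evaluation of quantifier-free formulas in a labelled graph. -/
def QF.eval {Sig α V : Type} (adj : V → V → Prop) (lb : V → Sig)
    (ass : α → V) : QF Sig α → Prop
  | .tru => True
  | .eq i j => ass i = ass j
  | .edge i j => adj (ass i) (ass j)
  | .lab a i => lb (ass i) = a
  | .not φ => ¬ QF.eval adj lb ass φ
  | .and φ ψ => QF.eval adj lb ass φ ∧ QF.eval adj lb ass ψ
  | .or φ ψ => QF.eval adj lb ass φ ∨ QF.eval adj lb ass ψ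

/-- Existential first-order formulas: a block of `k` existential quantifiers
followed by a quantifier-free formula. -/
structure EF (Sig : Type) (α : Type) : Type where
  k : ℕ
  body : QF Sig (α ⊕ Fin k)

/-- Satisfaction of an existential formula in a labelled graph, under an
assignment of the free variables. -/
def EF.Realize {Sig α V : Type} (adj : V → V → Prop) (lb : V → Sig)
    (φ : EF Sig α) (ass : α → V) : Prop :=
  ∃ w : Fin φ.k → V, φ.body.eval adj lb (Sum.elim ass w)

/-- Adjacency in the path graph on `n` vertices. -/
def pathAdj (n : ℕ) (i j : Fin n) : Prop :=
  (i : ℕ) + 1 = (j : ℕ) ∨ (j : ℕ) + 1 = (i : ℕ)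



/-!
Arcs of `H^r` climb at most one layer, so a directed path from the first copy of `G` to the last
one meets every copy. Suppose no vertex of the last copy is reachable from the first copy, and
let `k u` be the highest layer `i` such that `(u, i)` is reachable. Whether `(u, i) → (v, j)` is
an arc depends only on `u`, `v` and the kind of `j - i` (`1`, `0`, `-1` or `≤ -2`), so `k` is a
potential: along every arc `k v - k u ≥ j - i`. Lifting every vertex `(u, i)` with `i > k u` one
layer up changes the layer difference of two vertices only where the potential forces the two
competing adjacency rules to agree, so it embeds `G^s` into `G^(s+1)` with labels, contradicting
the antichain property.
-/

lemma exists_mem_eq_of_isChain_cons {α : Type*} {R : α → α → Prop} {f : α → ℕ}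
    (hR : ∀ x y, R x y → f y ≤ f x + 1) {a : α} {l : List α} (hl : (a :: l).IsChain R)
    {t : ℕ} (ha : f a ≤ t) (ht : t ≤ f ((a :: l).getLast (List.cons_ne_nil a l))) :
    ∃ b ∈ a :: l, f b = t := by
  induction l generalizing a with
  | nil => exact ⟨a, List.mem_singleton_self a, by simp_all; omega⟩
  | cons b l ih =>
    rw [List.isChain_cons_cons] at hl
    rcases Nat.eq_or_lt_of_le ha with rfl | hlt
    · exact ⟨a, List.mem_cons_self, rfl⟩
    · obtain ⟨c, hc, hct⟩ := ih hl.2 (by have := hR _ _ hl.1; omega) (by simpa using ht)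
      exact ⟨c, List.mem_cons_of_mem a hc, hct⟩

section RegularSequence

variable {m : ℕ} {Sig : Type} {G₀ : SimpleGraph (Fin m)} {ℓ : Fin m → Sig}
  {C₀ F₀ : Set (Sig × Sig)}

lemma regArc_iff_of_eq {r : ℕ} {u v : Fin m} {i j : Fin r} (h : (j : ℕ) = i) :
    regArc G₀ ℓ C₀ F₀ r (u, i) (v, j) ↔ ¬(G₀.Adj u v ↔ (ℓ u, ℓ v) ∈ F₀) := by
  have : i = j := Fin.ext h.symm
  subst this
  simp [regArc, regAdj]

lemma regArc_iff_of_succ {r : ℕ} {u v : Fin m} {i j : Fin r} (h : (j : ℕ) = i + 1) :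
    regArc G₀ ℓ C₀ F₀ r (u, i) (v, j) ↔ ¬((ℓ u, ℓ v) ∈ C₀ ↔ (ℓ u, ℓ v) ∈ F₀) := by
  simp only [regArc, regAdj, Fin.ext_iff]
  grind

lemma regArc_iff_of_pred {r : ℕ} {u v : Fin m} {i j : Fin r} (h : (j : ℕ) + 1 = i) :
    regArc G₀ ℓ C₀ F₀ r (u, i) (v, j) ↔ ¬((ℓ v, ℓ u) ∈ C₀ ↔ (ℓ u, ℓ v) ∈ F₀) := by
  simp only [regArc, regAdj, Fin.ext_iff]
  grind

lemma regArc_iff_of_add_two_le {r : ℕ} {u v : Fin m} {i j : Fin r} (h : (j : ℕ) + 2 ≤ i) :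
    regArc G₀ ℓ C₀ F₀ r (u, i) (v, j) ↔ ¬((ℓ v, ℓ u) ∈ F₀ ↔ (ℓ u, ℓ v) ∈ F₀) := by
  simp only [regArc, regAdj, Fin.ext_iff]
  grind

lemma le_succ_of_regArc {r : ℕ} {a b : Fin m × Fin r} (h : regArc G₀ ℓ C₀ F₀ r a b) :
    (b.2 : ℕ) ≤ a.2 + 1 := by
  by_contra! hlt
  simp only [regArc, regAdj, Fin.ext_iff] at h
  grind

variable (G₀ ℓ C₀ F₀) in
/-- The four clauses correspond to the four kinds of arcs `(u, i) → (v, j)` of `H^r`: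
`j = i + 1`, `j = i`, `j + 1 = i` and `j + 2 ≤ i`. -/
def IsLayerPotential (k : Fin m → ℕ) : Prop :=
  ∀ u v,
    (¬((ℓ u, ℓ v) ∈ C₀ ↔ (ℓ u, ℓ v) ∈ F₀) → k u + 1 ≤ k v) ∧
    (¬(G₀.Adj u v ↔ (ℓ u, ℓ v) ∈ F₀) → k u ≤ k v) ∧
    (¬((ℓ v, ℓ u) ∈ C₀ ↔ (ℓ u, ℓ v) ∈ F₀) → k u ≤ k v + 1) ∧
    (¬((ℓ v, ℓ u) ∈ F₀ ↔ (ℓ u, ℓ v) ∈ F₀) → k u ≤ k v + 2)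

def layerShift (k : Fin m → ℕ) (u : Fin m) (i : ℕ) : ℕ := if k u < i then i + 1 else i

lemma layerShift_strictMono (k : Fin m → ℕ) (u : Fin m) : StrictMono (layerShift k u) := by
  intro i j hij
  simp only [layerShift]
  split_ifs <;> omega

lemma IsLayerPotential.bounds_of_consecutive_ne_same {k : Fin m → ℕ}
    (hk : IsLayerPotential G₀ ℓ C₀ F₀ k) {u v : Fin m} (h : ¬((ℓ u, ℓ v) ∈ C₀ ↔ G₀.Adj u v)) :
    k u ≤ k v ∧ k v ≤ k u + 1 := by
  have := hk u v
  have := hk v u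
  rw [G₀.adj_comm] at this
  grind

lemma IsLayerPotential.bounds_of_consecutive_ne_far {k : Fin m → ℕ}
    (hk : IsLayerPotential G₀ ℓ C₀ F₀ k) {u v : Fin m} (h : ¬((ℓ u, ℓ v) ∈ C₀ ↔ (ℓ u, ℓ v) ∈ F₀)) :
    k u + 1 ≤ k v ∧ k v ≤ k u + 2 := by
  have := hk u v
  have := hk v u
  grind

lemma IsLayerPotential.regAdj_layerShift_iff {k : Fin m → ℕ}
    (hk : IsLayerPotential G₀ ℓ C₀ F₀ k) {r s : ℕ} (u v : Fin m) (x y : Fin r) (x' y' : Fin s)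
    (hx : (x' : ℕ) = layerShift k u x) (hy : (y' : ℕ) = layerShift k v y) :
    regAdj G₀ ℓ C₀ F₀ r (u, x) (v, y) ↔ regAdj G₀ ℓ C₀ F₀ s (u, x') (v, y') := by
  have h1 := hk.bounds_of_consecutive_ne_same (u := u) (v := v)
  have h2 := hk.bounds_of_consecutive_ne_same (u := v) (v := u)
  have h3 := hk.bounds_of_consecutive_ne_far (u := u) (v := v)
  have h4 := hk.bounds_of_consecutive_ne_far (u := v) (v := u)
  rw [G₀.adj_comm v u] at h2
  simp only [regAdj, Fin.ext_iff, layerShift] at *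
  split_ifs at hx hy <;> grind

lemma IsLayerPotential.not_isRegularAntichain {k : Fin m → ℕ}
    (hk : IsLayerPotential G₀ ℓ C₀ F₀ k) : ¬IsRegularAntichain G₀ ℓ C₀ F₀ := by
  obtain ⟨B, hkB⟩ : ∃ B, ∀ u, k u ≤ B := ⟨_, fun u ↦ Finset.le_sup (Finset.mem_univ u)⟩
  have hlt (a : Fin m × Fin (B + 2)) : layerShift k a.1 a.2 < B + 3 := by
    have := hkB a.1
    simp only [layerShift]
    split_ifs <;> omega
  refine fun hanti ↦ hanti (B + 2) (B + 3) (by omega) (by omega) (by omega)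
    ⟨fun a ↦ (a.1, ⟨layerShift k a.1 a.2, hlt a⟩), ?_, ?_, ?_⟩
  · rintro ⟨u, x⟩ ⟨v, y⟩ h
    simp only [Prod.mk.injEq, Fin.mk.injEq] at h
    obtain ⟨rfl, h⟩ := h
    simp [Fin.ext_iff, (layerShift_strictMono k u).injective h]
  · rintro ⟨u, x⟩ ⟨v, y⟩
    exact hk.regAdj_layerShift_iff u v x y _ _ rfl rfl
  · rintro ⟨u, x⟩
    have := hkB u
    simp only [regLabel, layerShift]
    split_ifs <;> simp only [Prod.mk.injEq, decide_eq_decide, true_and] <;> grind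

variable (G₀ ℓ C₀ F₀) in
def ReachableFromFirst (r : ℕ) (b : Fin m × Fin r) : Prop :=
  ∃ a : Fin m × Fin r, (a.2 : ℕ) = 0 ∧ Relation.ReflTransGen (regArc G₀ ℓ C₀ F₀ r) a b

section MaxReachableLayer

open Classical

variable (G₀ ℓ C₀ F₀) in
noncomputable def maxReachableLayer (r : ℕ) (u : Fin m) : ℕ :=
  Nat.findGreatest (fun i ↦ ∃ h : i < r, ReachableFromFirst G₀ ℓ C₀ F₀ r (u, ⟨i, h⟩)) (r - 1)

lemma reachableFromFirst_maxReachableLayer {r : ℕ} (hr : 0 < r) (u : Fin m) :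
    ∃ h : maxReachableLayer G₀ ℓ C₀ F₀ r u < r,
      ReachableFromFirst G₀ ℓ C₀ F₀ r (u, ⟨maxReachableLayer G₀ ℓ C₀ F₀ r u, h⟩) :=
  Nat.findGreatest_spec (P := fun i ↦ ∃ h : i < r, ReachableFromFirst G₀ ℓ C₀ F₀ r (u, ⟨i, h⟩))
    (Nat.zero_le _) ⟨hr, (u, ⟨0, hr⟩), rfl, .refl⟩

lemma le_maxReachableLayer {r : ℕ} {v : Fin m} {j : Fin r}
    (h : ReachableFromFirst G₀ ℓ C₀ F₀ r (v, j)) : (j : ℕ) ≤ maxReachableLayer G₀ ℓ C₀ F₀ r v :=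
  Nat.le_findGreatest (by omega) ⟨j.2, h⟩

end MaxReachableLayer

lemma maxReachableLayer_add_one_lt {r : ℕ} (hr : 0 < r)
    (hlast : ∀ b, ReachableFromFirst G₀ ℓ C₀ F₀ r b → (b.2 : ℕ) ≠ r - 1) (u : Fin m) :
    maxReachableLayer G₀ ℓ C₀ F₀ r u + 1 < r := by
  obtain ⟨h, hu⟩ := reachableFromFirst_maxReachableLayer hr u
  have := hlast _ hu
  simp only at this
  omega

lemma isLayerPotential_maxReachableLayer {r : ℕ} (hr : 0 < r)
    (hlast : ∀ b, ReachableFromFirst G₀ ℓ C₀ F₀ r b → (b.2 : ℕ) ≠ r - 1) :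
    IsLayerPotential G₀ ℓ C₀ F₀ (maxReachableLayer G₀ ℓ C₀ F₀ r) := by
  set k := maxReachableLayer G₀ ℓ C₀ F₀ r
  have step (u v : Fin m) (hu : k u < r) (j : ℕ) (hj : j < r)
      (harc : regArc G₀ ℓ C₀ F₀ r (u, ⟨k u, hu⟩) (v, ⟨j, hj⟩)) : j ≤ k v := by
    obtain ⟨_, a, ha, hreach⟩ := reachableFromFirst_maxReachableLayer hr u
    exact le_maxReachableLayer ⟨a, ha, hreach.tail harc⟩
  intro u v
  have hu : k u + 1 < r := maxReachableLayer_add_one_lt hr hlast u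
  refine ⟨fun h ↦ ?_, fun h ↦ ?_, fun h ↦ ?_, fun h ↦ ?_⟩
  · exact step u v (by omega) (k u + 1) hu ((regArc_iff_of_succ rfl).2 h)
  · exact step u v (by omega) (k u) (by omega) ((regArc_iff_of_eq rfl).2 h)
  · by_cases h1 : 1 ≤ k u
    · have := step u v (by omega) (k u - 1) (by omega)
        ((regArc_iff_of_pred (by simp only; omega)).2 h)
      omega
    · omega
  · by_cases h2 : 2 ≤ k u
    · have := step u v (by omega) (k u - 2) (by omega)
        ((regArc_iff_of_add_two_le (by simp only; omega)).2 h)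
      omega
    · omega

lemma exists_spanning_path_of_reachable {r : ℕ} {b : Fin m × Fin r}
    (hb : ReachableFromFirst G₀ ℓ C₀ F₀ r b) (hlast : (b.2 : ℕ) = r - 1) :
    ∃ (a : Fin m × Fin r) (q : List (Fin m × Fin r)),
      (a :: q).IsChain (regArc G₀ ℓ C₀ F₀ r) ∧
      (a.2 : ℕ) = 0 ∧
      (((a :: q).getLast (List.cons_ne_nil a q)).2 : ℕ) = r - 1 ∧
      ∀ i : Fin r, ∃ b ∈ a :: q, b.2 = i := by
  obtain ⟨a, ha, hab⟩ := hb
  obtain ⟨q, hchain, hq⟩ := List.exists_isChain_cons_of_relationReflTransGen hab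
  refine ⟨a, q, hchain, ha, hq ▸ hlast, fun i ↦ ?_⟩
  obtain ⟨c, hc, hci⟩ := exists_mem_eq_of_isChain_cons (f := fun c ↦ (c.2 : ℕ))
    (fun _ _ ↦ le_succ_of_regArc) hchain (t := i) (by omega) (by rw [hq]; omega)
  exact ⟨c, hc, Fin.ext hci⟩

end RegularSequence

theorem spanning_path_exists_general (m : ℕ) (Sig : Type)
    (G₀ : SimpleGraph (Fin m)) (ℓ : Fin m → Sig) (C₀ F₀ : Set (Sig × Sig))
    (hanti : IsRegularAntichain G₀ ℓ C₀ F₀) (r : ℕ) (hr : 3 ≤ r) :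
    ∃ (a : Fin m × Fin r) (q : List (Fin m × Fin r)),
      List.Chain (regArc G₀ ℓ C₀ F₀ r) a q ∧
      (a.2 : ℕ) = 0 ∧
      (((a :: q).getLast (List.cons_ne_nil a q)).2 : ℕ) = r - 1 ∧
      ∀ i : Fin r, ∃ b ∈ a :: q, b.2 = i := by
  by_cases h : ∃ b, ReachableFromFirst G₀ ℓ C₀ F₀ r b ∧ (b.2 : ℕ) = r - 1
  · obtain ⟨b, hb, hlast⟩ := h
    exact exists_spanning_path_of_reachable hb hlast
  · exact absurd hanti (isLayerPotential_maxReachableLayer (by omega)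
      fun b hb hlast ↦ h ⟨b, hb, hlast⟩).not_isRegularAntichain

/-- For a regular antichain and `r ≥ 3`, the directed graph `H^r` contains a
spanning path: a directed path starting in the first copy of `G`, ending in the
last copy, and visiting every copy. -/
theorem spanning_path_exists (m : ℕ) (Sig : Type) [Fintype Sig]
    (G₀ : SimpleGraph (Fin m)) (ℓ : Fin m → Sig) (C₀ F₀ : Set (Sig × Sig))
    (hanti : IsRegularAntichain G₀ ℓ C₀ F₀) (r : ℕ) (hr : 3 ≤ r) :
    ∃ (a : Fin m × Fin r) (q : List (Fin m × Fin r)),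
      List.Chain (regArc G₀ ℓ C₀ F₀ r) a q ∧
      (a.2 : ℕ) = 0 ∧
      (((a :: q).getLast (List.cons_ne_nil a q)).2 : ℕ) = r - 1 ∧
      ∀ i : Fin r, ∃ b ∈ a :: q, b.2 = i :=
  spanning_path_exists_general m Sig G₀ ℓ C₀ F₀ hanti r hr

end P2601
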